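/- arXiv:2407.19047 — 5 statements merged into one kernel-verified Lean document; each statement's English description precedes it below -/
import Mathlib

section
/- Let n ≥ 5 be odd and let X be a transitive subgroup of the symmetric group S_n that contains an (n−2)-cycle. Then X is 3-transitive. -/
/-!
Conjugating the `(n-2)`-cycle `g` by the transitive group `X` shows that every point `x` has a
partner `y`: `X` contains a cycle fixing exactly `x` and `y`. The stabilizer of `x` contains that
cycle, so it is transitive on the remaining points unless it fixes `y`. If no point stabilizer were
transitive, every point would therefore have a unique partner, and `x ↦ partner x` would be a
fixed-point-free involution on an odd number of points. Hence some point stabilizer is transitive,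
`X` is 2-transitive, and since the powers of `g` fix both fixed points of `g` and are transitive
on the other points, `X` is 3-transitive.
-/

open Equiv Equiv.Perm Finset

section

variable {α : Type*} (G : Subgroup (Perm α))

def IsStabilizerTransitive (u : α) : Prop :=
  ∀ v w, v ≠ u → w ≠ u → ∃ σ ∈ G, σ u = u ∧ σ v = w

variable {G}

lemma exists_mem_apply_eq_apply_eq_of_isStabilizerTransitive
    (htrans : ∀ a b : α, ∃ σ ∈ G, σ a = b) {u : α} (hu : IsStabilizerTransitive G u)
    {a b c d : α} (hab : a ≠ b) (hcd : c ≠ d) : ∃ σ ∈ G, σ a = c ∧ σ b = d := by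
  obtain ⟨σ, hσ, hσa⟩ := htrans a u
  obtain ⟨ρ, hρ, hρc⟩ := htrans c u
  obtain ⟨τ, hτ, hτu, hτb⟩ := hu (σ b) (ρ d) (hσa ▸ σ.injective.ne hab.symm)
    (hρc ▸ ρ.injective.ne hcd.symm)
  refine ⟨ρ⁻¹ * τ * σ, mul_mem (mul_mem (inv_mem hρ) hτ) hσ, ?_, ?_⟩
  · rw [mul_apply, mul_apply, hσa, hτu, inv_eq_iff_eq, hρc]
  · rw [mul_apply, mul_apply, hτb, inv_eq_iff_eq]

variable [Fintype α] [DecidableEq α]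

lemma Equiv.Perm.apply_eq_self_of_support_eq_compl {h : Perm α} {s : Finset α}
    (hs : h.support = sᶜ) {x : α} (hx : x ∈ s) : h x = x :=
  notMem_support.1 (hs ▸ fun hc => mem_compl.1 hc hx)

lemma Equiv.Perm.IsCycle.exists_zpow_apply_eq_of_support_eq_compl {h : Perm α} (hh : h.IsCycle)
    {s : Finset α} (hs : h.support = sᶜ) {z w : α} (hz : z ∉ s) (hw : w ∉ s) :
    ∃ i : ℤ, (h ^ i) z = w :=
  hh.sameCycle (mem_support.1 (hs ▸ mem_compl.2 hz)) (mem_support.1 (hs ▸ mem_compl.2 hw))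

lemma Equiv.Perm.IsCycle.exists_support_eq_compl_pair {g : Perm α} (hg : g.IsCycle)
    (hcard : #g.support = Fintype.card α - 2) : ∃ p q, p ≠ q ∧ g.support = {p, q}ᶜ := by
  have hcompl : #g.supportᶜ = 2 := by
    have := hg.two_le_card_support
    have := card_le_univ g.support
    rw [card_compl]
    omega
  obtain ⟨p, q, hpq, hsupp⟩ := card_eq_two.1 hcompl
  exact ⟨p, q, hpq, by rw [← hsupp, compl_compl]⟩

lemma Equiv.Perm.support_conj_eq_compl_pair {g : Perm α} {p q : α} (hg : g.support = {p, q}ᶜ)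
    (σ : Perm α) : (σ * g * σ⁻¹).support = {σ p, σ q}ᶜ := by
  ext z
  simp [support_conj, hg, symm_apply_eq]

variable (G) in
def ArePartners (x y : α) : Prop :=
  x ≠ y ∧ ∃ h ∈ G, h.IsCycle ∧ h.support = {x, y}ᶜ

lemma ArePartners.symm {x y : α} (hxy : ArePartners G x y) : ArePartners G y x := by
  obtain ⟨hne, h, hG, hc, hs⟩ := hxy
  exact ⟨hne.symm, h, hG, hc, by rw [hs, pair_comm]⟩

lemma exists_arePartners (htrans : ∀ a b : α, ∃ σ ∈ G, σ a = b) {g : Perm α} (hg : g ∈ G)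
    (hcyc : g.IsCycle) {p q : α} (hpq : p ≠ q) (hsupp : g.support = {p, q}ᶜ) (x : α) :
    ∃ y, ArePartners G x y := by
  obtain ⟨σ, hσ, rfl⟩ := htrans p x
  exact ⟨σ q, σ.injective.ne hpq, σ * g * σ⁻¹, mul_mem (mul_mem hσ hg) (inv_mem hσ),
    hcyc.conj, support_conj_eq_compl_pair hsupp σ⟩

/-- The cycle `h` of `ArePartners G x y` joins all points other than `x` and `y`, and `τ` joins
`y` to one of them. -/
lemma ArePartners.isStabilizerTransitive {x y : α} (hxy : ArePartners G x y) {τ : Perm α}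
    (hτ : τ ∈ G) (hτx : τ x = x) (hτy : τ y ≠ y) : IsStabilizerTransitive G x := by
  obtain ⟨hne, h, hG, hc, hs⟩ := hxy
  suffices reach : ∀ v ≠ x, ∃ σ ∈ G, σ x = x ∧ σ y = v by
    intro v w hv hw
    obtain ⟨σ, hσ, hσx, rfl⟩ := reach v hv
    obtain ⟨ρ, hρ, hρx, rfl⟩ := reach w hw
    refine ⟨ρ * σ⁻¹, mul_mem hρ (inv_mem hσ), ?_, ?_⟩
    · rw [mul_apply, inv_eq_iff_eq.2 hσx.symm, hρx]
    · exact congrArg ρ (σ.symm_apply_apply y)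
  intro v hv
  by_cases hvy : v = y
  · exact ⟨1, one_mem G, rfl, hvy.symm⟩
  have hτy' : τ y ∉ ({x, y} : Finset α) := by
    simp [hτy, hτx ▸ τ.injective.ne hne.symm]
  obtain ⟨i, hi⟩ := hc.exists_zpow_apply_eq_of_support_eq_compl hs hτy'
    (show v ∉ ({x, y} : Finset α) by simp [hv, hvy])
  refine ⟨h ^ i * τ, mul_mem (zpow_mem hG i) hτ, ?_, hi⟩
  rw [mul_apply, hτx, zpow_apply_eq_self_of_apply_eq_self
    (apply_eq_self_of_support_eq_compl hs (mem_insert_self x _))]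

lemma ArePartners.unique (hG : ∀ u, ¬IsStabilizerTransitive G u) {x y y' : α}
    (hy : ArePartners G x y) (hy' : ArePartners G x y') : y = y' := by
  obtain ⟨-, h, hh, -, hs⟩ := hy'
  have hhx : h x = x := apply_eq_self_of_support_eq_compl hs (mem_insert_self x _)
  have hhy : h y = y := by
    by_contra hmove
    exact hG x (hy.isStabilizerTransitive hh hhx hmove)
  have hy_fixed : y ∉ h.support := notMem_support.2 hhy
  rw [hs] at hy_fixed
  simpa [hy.1.symm] using hy_fixed

lemma exists_isStabilizerTransitive (hodd : Odd (Fintype.card α))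
    (hpartner : ∀ x : α, ∃ y, ArePartners G x y) : ∃ u, IsStabilizerTransitive G u := by
  by_contra! hG
  choose f hf using hpartner
  have hinv : Function.Involutive f := fun x => ((hf x).symm.unique hG (hf (f x))).symm
  have hsq : hinv.toPerm ^ 2 ^ 1 = 1 := Equiv.ext hinv
  obtain ⟨x, hx⟩ := exists_fixed_point_of_prime hodd.not_two_dvd_nat hsq
  exact (hf x).1 hx.symm

lemma exists_mem_apply_eq_apply_eq_apply_eq_of_isCycle
    (h2 : ∀ a b c d : α, a ≠ b → c ≠ d → ∃ σ ∈ G, σ a = c ∧ σ b = d)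
    {g : Perm α} (hg : g ∈ G) (hcyc : g.IsCycle) {p q : α} (hpq : p ≠ q)
    (hsupp : g.support = {p, q}ᶜ) {a₁ a₂ a₃ b₁ b₂ b₃ : α}
    (ha₁₂ : a₁ ≠ a₂) (ha₁₃ : a₁ ≠ a₃) (ha₂₃ : a₂ ≠ a₃)
    (hb₁₂ : b₁ ≠ b₂) (hb₁₃ : b₁ ≠ b₃) (hb₂₃ : b₂ ≠ b₃) :
    ∃ σ ∈ G, σ a₁ = b₁ ∧ σ a₂ = b₂ ∧ σ a₃ = b₃ := by
  obtain ⟨σ, hσ, hσ₁, hσ₂⟩ := h2 a₁ a₂ p q ha₁₂ hpq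
  obtain ⟨τ, hτ, hτ₁, hτ₂⟩ := h2 b₁ b₂ p q hb₁₂ hpq
  have hσ₃ : σ a₃ ∉ ({p, q} : Finset α) := by
    simp [← hσ₁, ← hσ₂, σ.injective.ne ha₁₃.symm, σ.injective.ne ha₂₃.symm]
  have hτ₃ : τ b₃ ∉ ({p, q} : Finset α) := by
    simp [← hτ₁, ← hτ₂, τ.injective.ne hb₁₃.symm, τ.injective.ne hb₂₃.symm]
  obtain ⟨i, hi⟩ := hcyc.exists_zpow_apply_eq_of_support_eq_compl hsupp hσ₃ hτ₃
  have hgp := apply_eq_self_of_support_eq_compl hsupp (mem_insert_self p _)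
  have hgq := apply_eq_self_of_support_eq_compl hsupp (mem_insert_of_mem (mem_singleton_self q))
  refine ⟨τ⁻¹ * g ^ i * σ, mul_mem (mul_mem (inv_mem hτ) (zpow_mem hg i)) hσ, ?_, ?_, ?_⟩
  · rw [mul_apply, mul_apply, hσ₁, zpow_apply_eq_self_of_apply_eq_self hgp, inv_eq_iff_eq, hτ₁]
  · rw [mul_apply, mul_apply, hσ₂, zpow_apply_eq_self_of_apply_eq_self hgq, inv_eq_iff_eq, hτ₂]
  · rw [mul_apply, mul_apply, hi, inv_eq_iff_eq]

end

theorem stmt_0_general (n : ℕ) (hodd : Odd n)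
    (X : Subgroup (Equiv.Perm (Fin n)))
    (htrans : ∀ a b : Fin n, ∃ σ ∈ X, σ a = b)
    (g : Equiv.Perm (Fin n)) (hg : g ∈ X) (hcyc : g.IsCycle)
    (hsupp : g.support.card = n - 2) :
    ∀ a₁ a₂ a₃ b₁ b₂ b₃ : Fin n,
      a₁ ≠ a₂ → a₁ ≠ a₃ → a₂ ≠ a₃ → b₁ ≠ b₂ → b₁ ≠ b₃ → b₂ ≠ b₃ →
      ∃ σ ∈ X, σ a₁ = b₁ ∧ σ a₂ = b₂ ∧ σ a₃ = b₃ := by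
  obtain ⟨p, q, hpq, hpq'⟩ := hcyc.exists_support_eq_compl_pair (by simpa using hsupp)
  obtain ⟨u, hu⟩ := exists_isStabilizerTransitive (by simpa using hodd)
    (exists_arePartners htrans hg hcyc hpq hpq')
  intro a₁ a₂ a₃ b₁ b₂ b₃
  exact exists_mem_apply_eq_apply_eq_apply_eq_of_isCycle
    (fun _ _ _ _ => exists_mem_apply_eq_apply_eq_of_isStabilizerTransitive htrans hu)
    hg hcyc hpq hpq'

/-- Let `n ≥ 5` be odd and let `X` be a transitive subgroup of the symmetric group on
`n` points that contains an `(n-2)`-cycle.  Then `X` is 3-transitive. -/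
theorem stmt_0 (n : ℕ) (hn : 5 ≤ n) (hodd : Odd n)
    (X : Subgroup (Equiv.Perm (Fin n)))
    (htrans : ∀ a b : Fin n, ∃ σ ∈ X, σ a = b)
    (g : Equiv.Perm (Fin n)) (hg : g ∈ X) (hcyc : g.IsCycle)
    (hsupp : g.support.card = n - 2) :
    ∀ a₁ a₂ a₃ b₁ b₂ b₃ : Fin n,
      a₁ ≠ a₂ → a₁ ≠ a₃ → a₂ ≠ a₃ → b₁ ≠ b₂ → b₁ ≠ b₃ → b₂ ≠ b₃ →
      ∃ σ ∈ X, σ a₁ = b₁ ∧ σ a₂ = b₂ ∧ σ a₃ = b₃ :=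
  stmt_0_general n hodd X htrans g hg hcyc hsupp
end

section
/- Let n ≥ 5 be odd and let X be a primitive subgroup of S_n containing an (n−2)-cycle g fixing points 1 and 2. If the point stabilizer Stab_X(1) is not transitive on {2,...,n}, then Stab_X(1) = Stab_X(2). -/
/-!
If some element of `Stab_X(p₁)` moved `p₂`, composing it with powers of `g`, which act
transitively on the `n - 2` points outside `{p₁, p₂}`, would make `Stab_X(p₁)` transitive on the
points other than `p₁`. Hence `Stab_X(p₁) ≤ Stab_X(p₂)`; as `X` is transitive, both stabilizers
have index `n`, so they coincide.
-/

open Finset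

namespace Equiv.Perm

variable {α : Type*} [DecidableEq α]

theorem compl_support_eq_pair [Fintype α] {g : Perm α} {a b : α} (hab : a ≠ b)
    (ha : g a = a) (hb : g b = b) (hsupp : #g.support = Fintype.card α - 2) :
    g.supportᶜ = {a, b} := by
  have hpair : {a, b} ⊆ g.supportᶜ := by
    simp [insert_subset_iff, ha, hb]
  have hcard : #({a, b} : Finset α) = 2 := card_pair hab
  refine (eq_of_subset_of_card_le hpair ?_).symm
  have := card_le_univ ({a, b} : Finset α)
  rw [card_compl, hsupp]
  omega

theorem exists_mem_fix_apply_eq_of_isCycle {X : Subgroup (Perm α)} {g τ : Perm α} {a b e : α}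
    (hg : g ∈ X) (hcyc : g.IsCycle) (hab : a ≠ b) (ha : g a = a)
    (hsupp : ∀ x, x ≠ a → x ≠ b → g x ≠ x)
    (hτ : τ ∈ X) (hτa : τ a = a) (hτb : τ b ≠ b) (he : e ≠ a) :
    ∃ ρ ∈ X, ρ a = a ∧ ρ b = e := by
  by_cases heb : e = b
  · exact ⟨1, X.one_mem, rfl, heb.symm⟩
  have hτba : τ b ≠ a := fun h => hab (τ.injective (hτa.trans h.symm))
  obtain ⟨k, hk⟩ := hcyc.sameCycle (hsupp _ hτba hτb) (hsupp e he heb)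
  refine ⟨g ^ k * τ, X.mul_mem (X.zpow_mem hg k) hτ, ?_, hk⟩
  rw [mul_apply, hτa, zpow_apply_eq_self_of_apply_eq_self ha k]

end Equiv.Perm

theorem Subgroup.exists_mem_fix_apply_eq_of_forall {α : Type*} {X : Subgroup (Equiv.Perm α)}
    {a b : α}
    (h : ∀ e, e ≠ a → ∃ ρ ∈ X, ρ a = a ∧ ρ b = e) :
    ∀ c d, c ≠ a → d ≠ a → ∃ σ ∈ X, σ a = a ∧ σ c = d := by
  intro c d hc hd
  obtain ⟨ρc, hρcX, hρca, rfl⟩ := h c hc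
  obtain ⟨ρd, hρdX, hρda, rfl⟩ := h d hd
  refine ⟨ρd * ρc⁻¹, X.mul_mem hρdX (X.inv_mem hρcX), ?_, ?_⟩
  · rw [Equiv.Perm.mul_apply, Equiv.Perm.inv_eq_iff_eq.2 hρca.symm, hρda]
  · rw [Equiv.Perm.mul_apply, Equiv.Perm.inv_eq_iff_eq.2 rfl]

theorem MulAction.stabilizer_eq_of_le {G α : Type*} [Group G] [MulAction G α]
    [MulAction.IsPretransitive G α] [Finite α] {a b : α}
    (h : stabilizer G a ≤ stabilizer G b) : stabilizer G a = stabilizer G b := by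
  refine le_antisymm h (Subgroup.relIndex_eq_one.1 ?_)
  have hmul := Subgroup.relIndex_mul_index h
  have hpos : 0 < Nat.card α := Nat.card_pos_iff.2 ⟨⟨a⟩, inferInstance⟩
  rw [index_stabilizer_of_transitive, index_stabilizer_of_transitive] at hmul
  exact (Nat.mul_eq_right hpos.ne').1 hmul

theorem stmt_1_general (n : ℕ)
    (X : Subgroup (Equiv.Perm (Fin n)))
    (htrans : ∀ a b : Fin n, ∃ σ ∈ X, σ a = b)
    (g : Equiv.Perm (Fin n)) (hg : g ∈ X) (hcyc : g.IsCycle)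
    (hsupp : g.support.card = n - 2)
    (p₁ p₂ : Fin n) (hp : p₁ ≠ p₂) (h1 : g p₁ = p₁) (h2 : g p₂ = p₂)
    (hnotrans : ¬ ∀ c d : Fin n, c ≠ p₁ → d ≠ p₁ →
      ∃ σ ∈ X, σ p₁ = p₁ ∧ σ c = d) :
    ∀ σ ∈ X, (σ p₁ = p₁ ↔ σ p₂ = p₂) := by
  have hmoved : ∀ x, x ≠ p₁ → x ≠ p₂ → g x ≠ x := by
    intro x hx1 hx2
    rw [← Equiv.Perm.mem_support, ← notMem_compl,
      g.compl_support_eq_pair hp h1 h2 (by rwa [Fintype.card_fin])]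
    simp [hx1, hx2]
  have hle : MulAction.stabilizer X p₁ ≤ MulAction.stabilizer X p₂ := by
    intro τ (hτ1 : (τ : Equiv.Perm (Fin n)) p₁ = p₁)
    by_contra hτ2
    exact hnotrans <| Subgroup.exists_mem_fix_apply_eq_of_forall fun e he =>
      Equiv.Perm.exists_mem_fix_apply_eq_of_isCycle hg hcyc hp h1 hmoved τ.2 hτ1 hτ2 he
  have : MulAction.IsPretransitive X (Fin n) :=
    ⟨fun a b => let ⟨σ, hσ, h⟩ := htrans a b; ⟨⟨σ, hσ⟩, h⟩⟩
  intro σ hσ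
  exact SetLike.ext_iff.1 (MulAction.stabilizer_eq_of_le hle) ⟨σ, hσ⟩

/-- Let `n ≥ 5` be odd and let `X` be a primitive subgroup of `S_n` containing an
`(n-2)`-cycle `g` fixing two points `p₁` and `p₂`.  If the point stabilizer of `p₁`
is not transitive on the remaining points, then the stabilizers of `p₁` and of `p₂`
in `X` coincide. -/
theorem stmt_1 (n : ℕ) (hn : 5 ≤ n) (hodd : Odd n)
    (X : Subgroup (Equiv.Perm (Fin n)))
    (htrans : ∀ a b : Fin n, ∃ σ ∈ X, σ a = b)
    (hprim : ∀ B : Set (Fin n),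
      (∀ σ ∈ X, (fun x => σ x) '' B = B ∨ Disjoint ((fun x => σ x) '' B) B) →
      B.Subsingleton ∨ B = Set.univ)
    (g : Equiv.Perm (Fin n)) (hg : g ∈ X) (hcyc : g.IsCycle)
    (hsupp : g.support.card = n - 2)
    (p₁ p₂ : Fin n) (hp : p₁ ≠ p₂) (h1 : g p₁ = p₁) (h2 : g p₂ = p₂)
    (hnotrans : ¬ ∀ c d : Fin n, c ≠ p₁ → d ≠ p₁ →
      ∃ σ ∈ X, σ p₁ = p₁ ∧ σ c = d) :
    ∀ σ ∈ X, (σ p₁ = p₁ ↔ σ p₂ = p₂) :=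
  stmt_1_general n X htrans g hg hcyc hsupp p₁ p₂ hp h1 h2 hnotrans
end

section
/- Let n ≥ 5 be odd, let X ≤ S_n be an imprimitive transitive subgroup, and suppose g ∈ X is an (n−2)-cycle. Then a contradiction arises; equivalently, no imprimitive transitive subgroup of S_n (n ≥ 5 odd) contains an (n−2)-cycle. -/
/-!
The blocks of a transitive group are translates of one another, so `t := B.ncard` divides `n`;
as `n` is odd and `1 < t < n`, this gives `3 ≤ t` and `2 * t ≤ n`. The block through a fixed point
of `g` is `g`-stable, and having at least `3` elements it meets the support of `g`, which is a
single orbit of `⟨g⟩`. Hence it contains the `n - 2` points of the support and the fixed point,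
so `n - 1 ≤ t`, contradicting `2 * t ≤ n`.
-/

open Equiv MulAction Pointwise

variable {α : Type*} [DecidableEq α] [Fintype α]

theorem Equiv.Perm.IsCycle.support_subset_of_smul_eq {g : Perm α} (hg : g.IsCycle) {S : Set α}
    (hS : g • S = S) {y : α} (hyS : y ∈ S) (hy : g y ≠ y) : (g.support : Set α) ⊆ S := by
  intro z hz
  obtain ⟨k, rfl⟩ := hg.exists_pow_eq hy (Perm.mem_support.1 hz)
  have hk : g ^ k • S = S := pow_mem (mem_stabilizer_iff.2 hS) k
  rw [← hk]
  exact Set.smul_mem_smul_set hyS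

theorem Equiv.Perm.exists_mem_support_of_card_lt (g : Perm α) {S : Set α}
    (hS : Fintype.card α < S.ncard + g.support.card) : ∃ y ∈ S, g y ≠ y := by
  by_contra! h
  have hsub : S ⊆ ((g.supportᶜ : Finset α) : Set α) := fun y hy => by simpa using h y hy
  have hle := Set.ncard_le_ncard hsub
  rw [Set.ncard_coe_finset, Finset.card_compl] at hle
  have := g.support.card_le_univ
  omega

theorem Equiv.Perm.IsCycle.card_support_lt_ncard_of_isBlock {X : Subgroup (Perm α)}
    [IsPretransitive X α] {B : Set α} (hB : IsBlock X B) (hBne : B.Nonempty) {g : Perm α}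
    (hgX : g ∈ X) (hg : g.IsCycle) {x : α} (hx : g x = x)
    (hcard : Fintype.card α < B.ncard + g.support.card) : g.support.card < B.ncard := by
  obtain ⟨b, hb⟩ := hBne
  obtain ⟨σ, rfl⟩ := exists_smul_eq X b x
  have hxC : σ • b ∈ σ • B := Set.smul_mem_smul_set hb
  have hgC : g • (σ • B) = σ • B :=
    (hB.translate σ).smul_eq_of_mem (g := ⟨g, hgX⟩) hxC (by show g (σ • b) ∈ _; rwa [hx])
  rw [← Set.ncard_smul_set σ B] at hcard ⊢
  obtain ⟨y, hyC, hy⟩ := g.exists_mem_support_of_card_lt hcard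
  have hsub : insert (σ • b) (g.support : Set α) ⊆ σ • B :=
    Set.insert_subset hxC (hg.support_subset_of_smul_eq hgC hyC hy)
  have hx' : σ • b ∉ (g.support : Set α) := by simpa using hx
  simpa [Set.ncard_insert_of_notMem hx', Set.ncard_coe_finset] using Set.ncard_le_ncard hsub

theorem stmt_3_general (n : ℕ) (hodd : Odd n)
    (X : Subgroup (Equiv.Perm (Fin n)))
    (htrans : ∀ a b : Fin n, ∃ σ ∈ X, σ a = b)
    (B : Set (Fin n))
    (hblock : ∀ σ ∈ X, (fun x => σ x) '' B = B ∨ Disjoint ((fun x => σ x) '' B) B)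
    (hB1 : 1 < B.ncard) (hB2 : B ≠ Set.univ)
    (g : Equiv.Perm (Fin n)) (hg : g ∈ X) (hcyc : g.IsCycle)
    (hsupp : g.support.card = n - 2) :
    False := by
  have : IsPretransitive X (Fin n) := ⟨fun a b => let ⟨σ, hσ, h⟩ := htrans a b; ⟨⟨σ, hσ⟩, h⟩⟩
  have hB : IsBlock X B := isBlock_iff_smul_eq_or_disjoint.2 fun σ => hblock σ σ.2
  have hBne : B.Nonempty := Set.nonempty_of_ncard_ne_zero (by omega)
  have hB_dvd : B.ncard ∣ n := by simpa using hB.ncard_dvd_card hBne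
  have hB_odd : B.ncard % 2 = 1 := Nat.odd_iff.1 (hodd.of_dvd_nat hB_dvd)
  have hB_half : 2 * B.ncard ≤ n := by
    by_contra h
    exact hB2 (hB.eq_univ_of_card_lt (by rw [Nat.card_fin]; omega))
  obtain ⟨x, -, hx⟩ := Finset.exists_mem_notMem_of_card_lt_card (t := Finset.univ)
    (s := g.support) (by rw [Finset.card_univ, Fintype.card_fin]; omega)
  have hsupp_lt := hcyc.card_support_lt_ncard_of_isBlock hB hBne hg (Perm.notMem_support.1 hx)
    (by rw [Fintype.card_fin]; omega)
  omega

/-- No imprimitive transitive subgroup of `S_n` (`n ≥ 5` odd) contains an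
`(n-2)`-cycle: from a transitive subgroup `X` preserving a nontrivial block `B`
and containing an `(n-2)`-cycle one derives a contradiction. -/
theorem stmt_3 (n : ℕ) (hn : 5 ≤ n) (hodd : Odd n)
    (X : Subgroup (Equiv.Perm (Fin n)))
    (htrans : ∀ a b : Fin n, ∃ σ ∈ X, σ a = b)
    (B : Set (Fin n))
    (hblock : ∀ σ ∈ X, (fun x => σ x) '' B = B ∨ Disjoint ((fun x => σ x) '' B) B)
    (hB1 : 1 < B.ncard) (hB2 : B ≠ Set.univ)
    (g : Equiv.Perm (Fin n)) (hg : g ∈ X) (hcyc : g.IsCycle)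
    (hsupp : g.support.card = n - 2) :
    False :=
  stmt_3_general n hodd X htrans B hblock hB1 hB2 g hg hcyc hsupp
end

section
/- Let p be a prime and r ≥ 1. If a subgroup H ≤ SL_2(ℤ/p^r) contains the elementary matrices [[1,a],[0,1]] and [[1,0],[b,1]] for some a, b ∈ ℤ/p^r both coprime to p, then H = SL_2(ℤ/p^r). -/
/-!
`ZMod (p ^ r)` is a local ring, so the first column `(α, γ)` of any `M ∈ SL₂` contains a unit;
multiplying `M` on the left by a lower elementary matrix makes `γ` a unit, and then
`M = U((α - 1) / γ) · L(γ) · U((δ - 1) / γ)`. Since `a` and `b` are units of `ZMod (p ^ r)`,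
every elementary matrix is a power of one of the two given ones.
-/

open Matrix
open scoped MatrixGroups

namespace Matrix.SpecialLinearGroup

variable {R : Type*} [CommRing R]

def upper (x : R) : SL(2, R) :=
  ⟨!![1, x; 0, 1], by simp [det_fin_two_of]⟩

def lower (x : R) : SL(2, R) :=
  ⟨!![1, 0; x, 1], by simp [det_fin_two_of]⟩

@[simp]
lemma coe_upper (x : R) : (upper x : Matrix (Fin 2) (Fin 2) R) = !![1, x; 0, 1] := rfl

@[simp]
lemma coe_lower (x : R) : (lower x : Matrix (Fin 2) (Fin 2) R) = !![1, 0; x, 1] := rfl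

lemma upper_add (x y : R) : upper (x + y) = upper x * upper y := by
  ext i j
  fin_cases i <;> fin_cases j <;> simp [add_comm]

lemma lower_add (x y : R) : lower (x + y) = lower x * lower y := by
  ext i j
  fin_cases i <;> fin_cases j <;> simp

lemma upper_zsmul (k : ℤ) (x : R) : upper (k • x) = upper x ^ k :=
  map_zpow (MonoidHom.mk' (fun y : Multiplicative R ↦ upper y.toAdd) fun _ _ ↦ upper_add _ _)
    (.ofAdd x) k

lemma lower_zsmul (k : ℤ) (x : R) : lower (k • x) = lower x ^ k :=
  map_zpow (MonoidHom.mk' (fun y : Multiplicative R ↦ lower y.toAdd) fun _ _ ↦ lower_add _ _)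
    (.ofAdd x) k

lemma lower_mul_apply_one_zero (c : R) (M : SL(2, R)) :
    (lower c * M) 1 0 = c * M 0 0 + M 1 0 := by
  simp [mul_apply, Fin.sum_univ_two]

lemma det_fin_two_eq_one (M : SL(2, R)) : M 0 0 * M 1 1 - M 0 1 * M 1 0 = 1 := by
  rw [← det_fin_two, M.det_coe]

lemma eq_upper_mul_lower_mul_upper (M : SL(2, R)) (u : Rˣ) (hu : M 1 0 = u) :
    M = upper ((M 0 0 - 1) * ↑u⁻¹) * lower (M 1 0) * upper ((M 1 1 - 1) * ↑u⁻¹) := by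
  have hdet := det_fin_two_eq_one M
  have huu : M 1 0 * ↑u⁻¹ = 1 := by rw [hu, u.mul_inv]
  ext i j
  fin_cases i <;> fin_cases j <;> simp [mul_apply, Fin.sum_univ_two]
  · linear_combination (1 - M 0 0) * huu
  · linear_combination (-M 0 1 - ↑u⁻¹ * (M 0 0 - 1) * (M 1 1 - 1)) * huu - ↑u⁻¹ * hdet
  · linear_combination (1 - M 1 1) * huu

lemma mem_of_isUnit_apply_one_zero {H : Subgroup SL(2, R)} (hU : ∀ x, upper x ∈ H)
    (hL : ∀ x, lower x ∈ H) {M : SL(2, R)} (hM : IsUnit (M 1 0)) : M ∈ H := by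
  obtain ⟨u, hu⟩ := hM
  rw [eq_upper_mul_lower_mul_upper M u hu.symm]
  exact mul_mem (mul_mem (hU _) (hL _)) (hU _)

lemma exists_isUnit_lower_mul_apply_one_zero {M : SL(2, R)}
    (hM : IsUnit (M 0 0) ∨ IsUnit (M 1 0)) :
    ∃ c : R, IsUnit ((lower c * M) 1 0) := by
  simp only [lower_mul_apply_one_zero]
  rcases hM with ⟨u, hu⟩ | hγ
  · refine ⟨↑u⁻¹ * (1 - M 1 0), ?_⟩
    rw [← hu, mul_assoc, mul_comm, mul_assoc, u.mul_inv, mul_one, sub_add_cancel]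
    exact isUnit_one
  · exact ⟨0, by simpa using hγ⟩

lemma isUnit_apply_zero_zero_or_isUnit_apply_one_zero [IsLocalRing R] (M : SL(2, R)) :
    IsUnit (M 0 0) ∨ IsUnit (M 1 0) := by
  have hdet : M 0 0 * M 1 1 + -(M 0 1 * M 1 0) = 1 := by
    rw [← sub_eq_add_neg, det_fin_two_eq_one]
  refine (IsLocalRing.isUnit_or_isUnit_of_add_one hdet).imp (isUnit_of_mul_isUnit_left ·) ?_
  exact fun h ↦ isUnit_of_mul_isUnit_right (by simpa using h)

theorem eq_top_of_forall_upper_mem_of_forall_lower_mem [IsLocalRing R] {H : Subgroup SL(2, R)}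
    (hU : ∀ x, upper x ∈ H) (hL : ∀ x, lower x ∈ H) : H = ⊤ := by
  refine eq_top_iff.2 fun M _ ↦ ?_
  obtain ⟨c, hc⟩ := exists_isUnit_lower_mul_apply_one_zero
    (isUnit_apply_zero_zero_or_isUnit_apply_one_zero M)
  simpa using mul_mem (inv_mem (hL c)) (mem_of_isUnit_apply_one_zero hU hL hc)

end Matrix.SpecialLinearGroup

namespace ZMod

lemma exists_zsmul_eq_of_isUnit {n : ℕ} {a : ZMod n} (ha : IsUnit a) (x : ZMod n) :
    ∃ k : ℤ, k • a = x :=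
  ⟨cast (x * a⁻¹), by
    rw [zsmul_eq_mul, intCast_zmod_cast, mul_assoc, inv_mul_of_unit a ha, mul_one]⟩

lemma isLocalRing_prime_pow {p r : ℕ} (hp : p.Prime) (hr : 1 ≤ r) :
    IsLocalRing (ZMod (p ^ r)) :=
  have : Fact p.Prime := ⟨hp⟩
  have : Nontrivial (ZMod (p ^ r)) := nontrivial_iff.2 fun h ↦
    hp.one_lt.ne' ((Nat.pow_eq_one.1 h).resolve_right (by omega))
  .of_surjective' (PadicInt.toZModPow r) (ringHom_surjective _)

end ZMod

namespace Matrix.SpecialLinearGroup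

variable {n : ℕ} {H : Subgroup SL(2, ZMod n)} {a : ZMod n}

lemma upper_mem_of_isUnit (ha : IsUnit a) (h : upper a ∈ H) (x : ZMod n) : upper x ∈ H := by
  obtain ⟨k, rfl⟩ := ZMod.exists_zsmul_eq_of_isUnit ha x
  exact upper_zsmul k a ▸ zpow_mem h k

lemma lower_mem_of_isUnit (ha : IsUnit a) (h : lower a ∈ H) (x : ZMod n) : lower x ∈ H := by
  obtain ⟨k, rfl⟩ := ZMod.exists_zsmul_eq_of_isUnit ha x
  exact lower_zsmul k a ▸ zpow_mem h k

end Matrix.SpecialLinearGroup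

/-- If a subgroup `H ≤ SL₂(ℤ/p^r)` contains the elementary matrices `[[1,a],[0,1]]`
and `[[1,0],[b,1]]` with `a, b` units, then `H = SL₂(ℤ/p^r)`. -/
theorem stmt_6 (p : ℕ) (hp : p.Prime) (r : ℕ) (hr : 1 ≤ r)
    (a b : ZMod (p ^ r)) (ha : IsUnit a) (hb : IsUnit b)
    (H : Subgroup (Matrix.SpecialLinearGroup (Fin 2) (ZMod (p ^ r))))
    (hU : (⟨!![1, a; 0, 1], by simp [Matrix.det_fin_two_of]⟩ :
        Matrix.SpecialLinearGroup (Fin 2) (ZMod (p ^ r))) ∈ H)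
    (hL : (⟨!![1, 0; b, 1], by simp [Matrix.det_fin_two_of]⟩ :
        Matrix.SpecialLinearGroup (Fin 2) (ZMod (p ^ r))) ∈ H) :
    H = ⊤ :=
  have := ZMod.isLocalRing_prime_pow hp hr
  SpecialLinearGroup.eq_top_of_forall_upper_mem_of_forall_lower_mem
    (SpecialLinearGroup.upper_mem_of_isUnit ha hU) (SpecialLinearGroup.lower_mem_of_isUnit hb hL)
end

section
/- Let n ≥ 5 be odd. The alternating group A_n is generated by an n-cycle u and an (n−2)-cycle v such that |u| = n, |v| = n−2, and these together with |uv| can be arranged so that |u|, |v|, |uv| are pairwise coprime; in particular, A_n admits a generating pair (u,v) with |u|, |v|, |uv| pairwise coprime. -/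
/-!
Let `c` be a full `n`-cycle, `t = (x, c x)` and `tₖ = cᵏ t c⁻ᵏ`. Take `u = c` and `v = c⁻¹ t₀ t₂`,
so that `u v = t₀ t₂` is a product of two disjoint transpositions; the orders `n`, `n - 2`, `2`
are pairwise coprime because `n` is odd.

The subgroup `H = ⟨c, t₀ t₂⟩` contains every conjugate `tₖ t₍ₖ₊₂₎`, hence by telescoping every
`t₀ t₂ₘ`; since `n` is odd, `2m ≡ 1 (mod n)` for some `m`, so `H` contains the 3-cycle `t₀ t₁`.
This also shows that `t` normalizes `H`; as `c` and `t` generate `Sₙ`, `H` is normal in `Sₙ`, so it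
contains all 3-cycles, i.e. `H = Aₙ`. Finally `v⁻¹ = t₂ t₀ c` arises from `c` by splitting off the
fixed points `x` and `c² x`, so it is an `(n - 2)`-cycle.
-/

open Equiv Equiv.Perm Subgroup

section Group

variable {G : Type*} [Group G]

theorem mul_conj_mem_closure_mul_conj_sq {c t : G} {n : ℕ} (hn : Odd n) (hc : c ^ n = 1)
    (ht : t * t = 1) : t * (c * t * c⁻¹) ∈ closure {c, t * (c ^ 2 * t * (c ^ 2)⁻¹)} := by
  set H := closure {c, t * (c ^ 2 * t * (c ^ 2)⁻¹)}
  have ht' : t⁻¹ = t := inv_eq_of_mul_eq_one_right ht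
  have hcH : c ∈ H := subset_closure (Set.mem_insert _ _)
  have hgH : t * (c ^ 2 * t * (c ^ 2)⁻¹) ∈ H := subset_closure (Set.mem_insert_of_mem _ rfl)
  have step (k : ℕ) : (c ^ k * t * (c ^ k)⁻¹)⁻¹ * (c ^ (k + 2) * t * (c ^ (k + 2))⁻¹) ∈ H := by
    have e : (c ^ k * t * (c ^ k)⁻¹)⁻¹ * (c ^ (k + 2) * t * (c ^ (k + 2))⁻¹) =
        c ^ k * (t⁻¹ * (c ^ 2 * t * (c ^ 2)⁻¹)) * (c ^ k)⁻¹ := by group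
    rw [e, ht']
    exact H.mul_mem (H.mul_mem (H.pow_mem hcH k) hgH) (H.inv_mem (H.pow_mem hcH k))
  have telescope (m : ℕ) : t⁻¹ * (c ^ (2 * m) * t * (c ^ (2 * m))⁻¹) ∈ H := by
    induction m with
    | zero => simp [H.one_mem]
    | succ m ih =>
      have e : t⁻¹ * (c ^ (2 * (m + 1)) * t * (c ^ (2 * (m + 1)))⁻¹) =
          (t⁻¹ * (c ^ (2 * m) * t * (c ^ (2 * m))⁻¹)) *
            ((c ^ (2 * m) * t * (c ^ (2 * m))⁻¹)⁻¹ *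
              (c ^ (2 * m + 2) * t * (c ^ (2 * m + 2))⁻¹)) := by group
      rw [e]
      exact H.mul_mem ih (step _)
  obtain ⟨m, hm⟩ := hn
  have hcm : c ^ (2 * (m + 1)) = c := by
    rw [show 2 * (m + 1) = n + 1 by omega, pow_succ, hc, one_mul]
  simpa [hcm, ht'] using telescope (m + 1)

theorem conj_mem_closure_mul_conj_sq {c t : G} {n : ℕ} (hn : Odd n) (hc : c ^ n = 1)
    (ht : t * t = 1) :
    ∀ s ∈ ({c, t * (c ^ 2 * t * (c ^ 2)⁻¹)} : Set G),
      t * s * t⁻¹ ∈ closure {c, t * (c ^ 2 * t * (c ^ 2)⁻¹)} := by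
  have ht' : t⁻¹ = t := inv_eq_of_mul_eq_one_right ht
  rintro s (rfl | rfl)
  · have e : t * s * t⁻¹ = t * (s * t * s⁻¹) * s := by rw [ht']; group
    rw [e]
    exact mul_mem (mul_conj_mem_closure_mul_conj_sq hn hc ht)
      (subset_closure (Set.mem_insert _ _))
  · have hX : (c ^ 2 * t * (c ^ 2)⁻¹)⁻¹ = c ^ 2 * t * (c ^ 2)⁻¹ := by
      simp only [mul_inv_rev, inv_inv, ht', mul_assoc]
    have e : t * (t * (c ^ 2 * t * (c ^ 2)⁻¹)) * t⁻¹ = (t * (c ^ 2 * t * (c ^ 2)⁻¹))⁻¹ := by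
      rw [mul_inv_rev, hX, ← mul_assoc t t, ht, one_mul]
    rw [e]
    exact inv_mem (subset_closure (Set.mem_insert_of_mem _ rfl))

theorem closure_normal_of_conj_mem [Finite G] {S T : Set G} (hT : closure T = ⊤)
    (hST : ∀ t ∈ T, ∀ s ∈ S, t * s * t⁻¹ ∈ closure S) : (closure S).Normal := by
  rw [← normalizer_eq_top_iff, eq_top_iff, ← hT, closure_le]
  intro t ht
  refine mem_normalizer_fintype fun s hs ↦ ?_
  exact (closure_le ((closure S).comap (MulAut.conj t).toMonoidHom)).mpr (hST t ht) hs

theorem closure_pair_inv_mul (a b : G) : closure {a, a⁻¹ * b} = closure {a, b} := by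
  have ha {y : G} : a ∈ closure {a, y} := subset_closure (Set.mem_insert _ _)
  have hy {y : G} : y ∈ closure {a, y} := subset_closure (Set.mem_insert_of_mem _ rfl)
  apply le_antisymm <;> rw [closure_le, Set.insert_subset_iff, Set.singleton_subset_iff]
  · exact ⟨ha, mul_mem (inv_mem ha) hy⟩
  · exact ⟨ha, by simpa using mul_mem ha (hy (y := a⁻¹ * b))⟩

end Group

open Finset

namespace Equiv.Perm

variable {α : Type*} [Fintype α] [DecidableEq α]

theorem alternatingGroup_le_of_isThreeCycle_mem {H : Subgroup (Perm α)} [hH : H.Normal]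
    {σ : Perm α} (hσ : σ.IsThreeCycle) (hσH : σ ∈ H) : alternatingGroup α ≤ H := by
  rw [← closure_three_cycles_eq_alternating, closure_le]
  intro τ hτ
  obtain ⟨g, rfl⟩ := isConj_iff.mp (isConj_iff_cycleType_eq.mpr (hσ.trans hτ.symm))
  exact hH.conj_mem σ hσH g

theorem IsCycle.mem_alternatingGroup_of_odd {c : Perm α} (hc : c.IsCycle)
    (hodd : Odd #c.support) : c ∈ alternatingGroup α := by
  rw [mem_alternatingGroup, hc.sign, hodd.neg_one_pow, neg_neg]

theorem IsCycle.nodup_map_range_pow_apply {c : Perm α} (hc : c.IsCycle) {x : α}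
    (hx : x ∈ c.support) {m : ℕ} (hm : m ≤ #c.support) :
    ((List.range m).map fun k ↦ (c ^ k) x).Nodup := by
  have hcyc : c.IsCycleOn (c.support : Set α) := by
    rw [coe_support_eq_set_support]; exact hc.isCycleOn
  refine List.nodup_range.map_on fun i hi j hj h ↦ ?_
  rw [List.mem_range] at hi hj
  exact ((hcyc.pow_apply_eq_pow_apply hx).mp h).eq_of_lt_of_lt (by omega) (by omega)

theorem IsCycle.swap_mul_of_apply_apply_ne {f : Perm α} (hf : f.IsCycle) {x : α}
    (hx : f (f x) ≠ x) :
    (swap x (f x) * f).IsCycle ∧ #(swap x (f x) * f).support = #f.support - 1 := by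
  have hfx : f x ≠ x := fun h ↦ hx (by rw [h, h])
  refine ⟨hf.swap_mul hfx hx, ?_⟩
  rw [support_swap_mul_eq f x hx, card_sdiff_of_subset (by simpa using hfx), card_singleton]

theorem closure_isCycle_swap_mul_swap_eq_alternatingGroup {c : Perm α} (hc : c.IsCycle)
    (hsupp : c.support = univ) (hodd : Odd (Fintype.card α)) (x : α) :
    closure {c, swap x (c x) * swap ((c ^ 2) x) ((c ^ 3) x)} = alternatingGroup α := by
  have hcard : #c.support = Fintype.card α := by rw [hsupp, card_univ]
  have h3 : 3 ≤ #c.support := by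
    have := hc.two_le_card_support
    obtain ⟨k, hk⟩ := hodd
    omega
  obtain ⟨⟨h01, h02⟩, h12⟩ : (x ≠ c x ∧ x ≠ (c ^ 2) x) ∧ c x ≠ (c ^ 2) x := by
    simpa [List.range_succ] using hc.nodup_map_range_pow_apply (hsupp ▸ mem_univ x) h3
  have hn : c ^ Fintype.card α = 1 := by rw [← hcard, ← hc.orderOf, pow_orderOf_eq_one]
  have ht : swap x (c x) * swap x (c x) = 1 := swap_mul_self _ _
  rw [show (c ^ 3) x = (c ^ 2) (c x) by rw [pow_succ, mul_apply], swap_apply_apply]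
  set H := closure {c, swap x (c x) * (c ^ 2 * swap x (c x) * (c ^ 2)⁻¹)}
  have hthree : (swap x (c x) * (c * swap x (c x) * c⁻¹)).IsThreeCycle := by
    rw [← swap_apply_apply, swap_comm x, ← mul_apply, ← sq]
    exact isThreeCycle_swap_mul_swap_same h01.symm h12 h02
  have hcH : c ∈ H := subset_closure (Set.mem_insert _ _)
  have : H.Normal := by
    refine closure_normal_of_conj_mem (closure_cycle_adjacent_swap hc hsupp x) ?_
    rintro s (rfl | rfl)
    · exact fun y hy ↦ mul_mem (mul_mem hcH (subset_closure hy)) (inv_mem hcH)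
    · exact conj_mem_closure_mul_conj_sq hodd hn ht
  refine le_antisymm ?_
    (alternatingGroup_le_of_isThreeCycle_mem hthree (mul_conj_mem_closure_mul_conj_sq hodd hn ht))
  rw [closure_le]
  rintro s (rfl | rfl)
  · exact hc.mem_alternatingGroup_of_odd (hcard ▸ hodd)
  · rw [SetLike.mem_coe, mem_alternatingGroup, map_mul, map_mul, map_mul, map_inv,
      mul_right_comm (sign _), mul_inv_cancel, one_mul, Int.units_mul_self]

theorem IsCycle.swap_mul_swap_mul {c : Perm α} (hc : c.IsCycle) {x : α} (hx : x ∈ c.support)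
    (h5 : 5 ≤ #c.support) :
    (swap ((c ^ 2) x) ((c ^ 3) x) * (swap x (c x) * c)).IsCycle ∧
      #(swap ((c ^ 2) x) ((c ^ 3) x) * (swap x (c x) * c)).support = #c.support - 2 := by
  obtain ⟨⟨-, h02, h03, h04⟩, ⟨-, h13, h14⟩, ⟨-, h24⟩, -⟩ :
      (x ≠ c x ∧ x ≠ (c ^ 2) x ∧ x ≠ (c ^ 3) x ∧ x ≠ (c ^ 4) x) ∧
        (c x ≠ (c ^ 2) x ∧ c x ≠ (c ^ 3) x ∧ c x ≠ (c ^ 4) x) ∧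
          ((c ^ 2) x ≠ (c ^ 3) x ∧ (c ^ 2) x ≠ (c ^ 4) x) ∧ (c ^ 3) x ≠ (c ^ 4) x := by
    simpa [List.range_succ] using hc.nodup_map_range_pow_apply hx h5
  have hpow (k : ℕ) : c ((c ^ k) x) = (c ^ (k + 1)) x := by rw [pow_succ', mul_apply]
  have hf2 : (swap x (c x) * c) ((c ^ 2) x) = (c ^ 3) x := by
    rw [mul_apply, hpow, swap_apply_of_ne_of_ne h03.symm h13.symm]
  have hf3 : (swap x (c x) * c) ((c ^ 3) x) = (c ^ 4) x := by
    rw [mul_apply, hpow, swap_apply_of_ne_of_ne h04.symm h14.symm]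
  obtain ⟨hcyc₁, hcard₁⟩ := hc.swap_mul_of_apply_apply_ne (x := x)
    (by rw [← mul_apply, ← sq]; exact h02.symm)
  obtain ⟨hcyc₂, hcard₂⟩ := hcyc₁.swap_mul_of_apply_apply_ne (x := (c ^ 2) x)
    (by rw [hf2, hf3]; exact h24.symm)
  rw [hf2] at hcyc₂ hcard₂
  exact ⟨hcyc₂, by rw [hcard₂, hcard₁]; omega⟩

theorem IsCycle.orderOf_swap_mul_swap {c : Perm α} (hc : c.IsCycle) {x : α}
    (hx : x ∈ c.support) (h4 : 4 ≤ #c.support) :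
    orderOf (swap x (c x) * swap ((c ^ 2) x) ((c ^ 3) x)) = 2 := by
  have hnodup : [x, c x, (c ^ 2) x, (c ^ 3) x].Nodup := by
    simpa [List.range_succ] using hc.nodup_map_range_pow_apply hx h4
  rw [← lcm_cycleType, cycleType_swap_mul_swap_of_nodup hnodup]
  rfl

end Equiv.Perm

/-- For odd `n ≥ 5`, the alternating group `A_n` is generated by an `n`-cycle `u` and an
`(n-2)`-cycle `v` such that the orders `|u| = n`, `|v| = n-2` and `|uv|` are pairwise
coprime. -/
theorem stmt_10 (n : ℕ) (hn : 5 ≤ n) (hodd : Odd n) :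
    ∃ u v : Equiv.Perm (Fin n),
      u ∈ alternatingGroup (Fin n) ∧ v ∈ alternatingGroup (Fin n) ∧
      u.IsCycle ∧ u.support.card = n ∧
      v.IsCycle ∧ v.support.card = n - 2 ∧
      orderOf u = n ∧ orderOf v = n - 2 ∧
      Subgroup.closure ({u, v} : Set (Equiv.Perm (Fin n))) = alternatingGroup (Fin n) ∧
      Nat.Coprime (orderOf u) (orderOf v) ∧
      Nat.Coprime (orderOf v) (orderOf (u * v)) ∧
      Nat.Coprime (orderOf u) (orderOf (u * v)) := by
  set c := finRotate n
  have hc : c.IsCycle := isCycle_finRotate_of_le (by omega)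
  have hsupp : c.support = univ := support_finRotate_of_le (by omega)
  have hcard : #c.support = n := by rw [hsupp, card_univ, Fintype.card_fin]
  set x : Fin n := ⟨0, by omega⟩
  have hx : x ∈ c.support := hsupp ▸ mem_univ x
  set g := swap x (c x) * swap ((c ^ 2) x) ((c ^ 3) x)
  have hclosure : closure {c, c⁻¹ * g} = alternatingGroup (Fin n) := by
    rw [closure_pair_inv_mul, closure_isCycle_swap_mul_swap_eq_alternatingGroup hc hsupp
      (by rwa [Fintype.card_fin]) x]
  obtain ⟨hvcyc, hvcard⟩ : (c⁻¹ * g).IsCycle ∧ #(c⁻¹ * g).support = n - 2 := by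
    have hinv : (c⁻¹ * g)⁻¹ = swap ((c ^ 2) x) ((c ^ 3) x) * (swap x (c x) * c) := by
      simp only [g, mul_inv_rev, swap_inv, inv_inv, mul_assoc]
    rw [← isCycle_inv, ← support_inv, hinv]
    simpa only [hcard] using hc.swap_mul_swap_mul hx (by omega)
  have hu : orderOf c = n := by rw [hc.orderOf, hcard]
  have hv : orderOf (c⁻¹ * g) = n - 2 := by rw [hvcyc.orderOf, hvcard]
  have huv : orderOf (c * (c⁻¹ * g)) = 2 := by
    rw [mul_inv_cancel_left]
    exact hc.orderOf_swap_mul_swap hx (by omega)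
  have hmem {s} (hs : s ∈ ({c, c⁻¹ * g} : Set (Perm (Fin n)))) : s ∈ alternatingGroup (Fin n) :=
    hclosure ▸ subset_closure hs
  refine ⟨c, c⁻¹ * g, hmem (Set.mem_insert _ _), hmem (Set.mem_insert_of_mem _ rfl), hc, hcard,
    hvcyc, hvcard, hu, hv, hclosure, ?_, ?_, ?_⟩
  · rw [hu, hv]
    exact (Nat.coprime_self_sub_right (by omega)).mpr (Nat.coprime_two_right.mpr hodd)
  · rw [hv, huv]
    exact Nat.coprime_two_right.mpr (Nat.Odd.sub_even (by omega) hodd even_two)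
  · rw [hu, huv]
    exact Nat.coprime_two_right.mpr hodd
end
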